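/- arXiv:0810.4627 — 3 statements merged into one kernel-verified Lean document; each statement's English description precedes it below -/
import Mathlib

section
/- If X is a shift of finite type and φ : X → Y is an open factor (surjective) code onto a shift space Y, then Y is a shift of finite type. -/
open Set Function Filter

variable {A : Type*} {B : Type*} {C : Type*}

/-- The shift map on the full shift. -/
def shiftMap (x : ℤ → A) : ℤ → A := fun i => x (i + 1)

/-- A shift space (subshift): a closed shift-invariant subset of the full shift. -/
def IsSubshift [TopologicalSpace A] (X : Set (ℤ → A)) : Prop :=
  IsClosed X ∧ shiftMap '' X = X

/-- The word `w` occurs in `x` at position `k`. -/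
def OccursAt (x : ℤ → A) (k : ℤ) (w : List A) : Prop :=
  ∀ i : Fin w.length, x (k + ((i : ℕ) : ℤ)) = w.get i

/-- The word `w` belongs to the language of `X`. -/
def WordIn (X : Set (ℤ → A)) (w : List A) : Prop :=
  ∃ x ∈ X, ∃ k : ℤ, OccursAt x k w

/-- Irreducibility of a shift space. -/
def IrreducibleSubshift (X : Set (ℤ → A)) : Prop :=
  ∀ u v : List A, WordIn X u → WordIn X v → ∃ w : List A, WordIn X (u ++ w ++ v)

/-- Nonwandering shift space. -/
def NonwanderingSubshift (X : Set (ℤ → A)) : Prop :=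
  ∀ u : List A, WordIn X u → ∃ w : List A, WordIn X (u ++ w ++ u)

/-- A shift of finite type: defined by a finite set of forbidden words. -/
def IsSFT (X : Set (ℤ → A)) : Prop :=
  ∃ F : Finset (List A), X = {x : ℤ → A | ∀ w ∈ F, ∀ k : ℤ, ¬ OccursAt x k w}

/-- A (sliding block) code: a continuous shift-commuting map between shift spaces. -/
def IsCode [TopologicalSpace A] [TopologicalSpace B]
    {X : Set (ℤ → A)} {Y : Set (ℤ → B)} (φ : X → Y) : Prop :=
  Continuous φ ∧
    ∀ (x : X) (hx : shiftMap (x : ℤ → A) ∈ X),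
      ((φ ⟨shiftMap (x : ℤ → A), hx⟩ : Y) : ℤ → B) = shiftMap ((φ x : Y) : ℤ → B)

/-- A sofic shift: a factor of a shift of finite type. -/
def IsSofic [TopologicalSpace A] (Y : Set (ℤ → A)) : Prop :=
  ∃ (n : ℕ) (Z : Set (ℤ → Fin n)), IsSubshift Z ∧ IsSFT Z ∧
    ∃ ψ : Z → Y, IsCode ψ ∧ Function.Surjective ψ

/-- Two points are left asymptotic if they agree on all sufficiently negative coordinates. -/
def LeftAsymptotic (x y : ℤ → A) : Prop := ∃ N : ℤ, ∀ i ≤ N, x i = y i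

/-- Two points are right asymptotic if they agree on all sufficiently positive coordinates. -/
def RightAsymptotic (x y : ℤ → A) : Prop := ∃ N : ℤ, ∀ i, N ≤ i → x i = y i

/-- A code is right closing if it never collapses two distinct left asymptotic points. -/
def RightClosing {X : Set (ℤ → A)} {Y : Set (ℤ → B)} (φ : X → Y) : Prop :=
  ∀ x x' : X, LeftAsymptotic (x : ℤ → A) (x' : ℤ → A) → φ x = φ x' → x = x'

/-- A code is left closing if it never collapses two distinct right asymptotic points. -/
def LeftClosing {X : Set (ℤ → A)} {Y : Set (ℤ → B)} (φ : X → Y) : Prop :=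
  ∀ x x' : X, RightAsymptotic (x : ℤ → A) (x' : ℤ → A) → φ x = φ x' → x = x'

/-- Bi-closing: both right and left closing. -/
def BiClosing {X : Set (ℤ → A)} {Y : Set (ℤ → B)} (φ : X → Y) : Prop :=
  RightClosing φ ∧ LeftClosing φ

/-- Finite-to-one map. -/
def FiniteToOne {α β : Type*} (φ : α → β) : Prop := ∀ y : β, (φ ⁻¹' {y}).Finite

/-- Every fiber has exactly `d` elements. -/
def ExactlyDToOne {α β : Type*} (φ : α → β) (d : ℕ) : Prop :=
  ∀ y : β, (φ ⁻¹' {y}).Finite ∧ Nat.card (φ ⁻¹' {y}) = d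

/-- Constant-to-one map. -/
def ConstantToOne {α β : Type*} (φ : α → β) : Prop := ∃ d : ℕ, ExactlyDToOne φ d

/-- A doubly transitive point: every word of `Y` occurs infinitely often to the left
and to the right. -/
def DoublyTransitive (Y : Set (ℤ → A)) (y : ℤ → A) : Prop :=
  ∀ w : List A, WordIn Y w → ∀ N : ℤ,
    (∃ k ≥ N, OccursAt y k w) ∧ (∃ k ≤ N, OccursAt y k w)

/-- The maximal nonwandering subshift of `X`. -/
def OmegaSet [TopologicalSpace A] (X : Set (ℤ → A)) : Set (ℤ → A) :=
  ⋃₀ {Z : Set (ℤ → A) | Z ⊆ X ∧ IsSubshift Z ∧ NonwanderingSubshift Z}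

/-- Topological entropy of a subshift, via the growth rate of the number of words. -/
noncomputable def subshiftEntropy (X : Set (ℤ → A)) : ℝ :=
  Filter.limsup
    (fun n : ℕ => Real.log (Nat.card {w : List A | w.length = n ∧ WordIn X w}) / n)
    Filter.atTop

/-- An irreducible component of `X`: a maximal nonempty irreducible subshift of `X`. -/
def IsIrreducibleComponent [TopologicalSpace A] (X X₀ : Set (ℤ → A)) : Prop :=
  X₀ ⊆ X ∧ IsSubshift X₀ ∧ X₀.Nonempty ∧ IrreducibleSubshift X₀ ∧
    ∀ Z : Set (ℤ → A), Z ⊆ X → IsSubshift Z → IrreducibleSubshift Z → X₀ ⊆ Z → Z = X₀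

-- The metric on a shift space: `d(x,y) = 2^{-k}` where `k` is maximal with
-- `x` and `y` agreeing on `[-k,k]`, and `0` if `x = y`.
open Classical in
noncomputable def shiftDist (x y : ℤ → A) : ℝ :=
  if x = y then 0
  else (2 : ℝ) ^ (-((sSup {n : ℕ | ∀ i : ℤ, |i| ≤ (n : ℤ) → x i = y i} : ℕ) : ℤ))

/-! A shift of finite type is closed under splicing: two of its points that agree on a long
enough window around `c` can be glued at `c`. Conversely, a subshift closed under splicing along
windows of radius `m` is of finite type, the forbidden words being the words of length `2m + 2`
outside its language: a point all of whose such windows are allowed is approximated by gluing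
windows together one at a time, and the subshift is closed.

It therefore suffices to transfer the splicing property from `X` to `Y`. By compactness, `φ` is a
sliding block code of some radius `r`, and openness becomes uniform: a point of `Y` close enough
to `φ x` has a preimage close to `x`. To glue `φ x` with a nearby `y'`, glue `x` with such a
preimage of `y'` inside `X`, and map the result back by `φ`. -/

open Topology

section Shift

def shiftBy (n : ℤ) (x : ℤ → A) : ℤ → A := fun i => x (i + n)

@[simp] theorem shiftBy_apply (n : ℤ) (x : ℤ → A) (i : ℤ) : shiftBy n x i = x (i + n) := rfl

@[simp] theorem shiftBy_zero (x : ℤ → A) : shiftBy 0 x = x := funext fun i => by simp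

theorem shiftBy_shiftBy (a b : ℤ) (x : ℤ → A) : shiftBy a (shiftBy b x) = shiftBy (a + b) x :=
  funext fun i => by simp [add_assoc]

theorem shiftBy_one : shiftBy 1 = shiftMap (A := A) := rfl

theorem shiftMap_shiftBy (n : ℤ) (x : ℤ → A) : shiftMap (shiftBy n x) = shiftBy (n + 1) x := by
  rw [← shiftBy_one, shiftBy_shiftBy, add_comm]

theorem image_shiftBy_eq {X : Set (ℤ → A)} (hX : shiftMap '' X = X) (n : ℤ) :
    shiftBy n '' X = X := by
  have hcomp : ∀ a b : ℤ, shiftBy a ∘ shiftBy b = shiftBy (a + b) (A := A) :=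
    fun a b => funext (shiftBy_shiftBy a b)
  induction n using Int.induction_on with
  | zero => simp
  | succ k ih => rw [add_comm, ← hcomp, image_comp, ih, shiftBy_one, hX]
  | pred k ih =>
    conv_lhs => rw [← hX, ← shiftBy_one, ← image_comp, hcomp]
    simpa using ih

theorem shiftBy_mem {X : Set (ℤ → A)} (hX : shiftMap '' X = X) (n : ℤ) {x : ℤ → A}
    (hx : x ∈ X) : shiftBy n x ∈ X :=
  image_shiftBy_eq hX n ▸ mem_image_of_mem _ hx

variable [TopologicalSpace A] [TopologicalSpace B] {X : Set (ℤ → A)} {Y : Set (ℤ → B)}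

theorem IsCode.coe_apply_shiftBy {φ : X → Y} (hφ : IsCode φ) (hX : shiftMap '' X = X)
    (n : ℤ) (x : X) (hn : shiftBy n (x : ℤ → A) ∈ X) :
    (φ ⟨shiftBy n x, hn⟩ : ℤ → B) = shiftBy n (φ x) := by
  induction n using Int.negInduction generalizing x with
  | nat n =>
    induction n with
    | zero => simp
    | succ n ih =>
      have hmem := shiftBy_mem hX n x.2
      have h := hφ.2 ⟨_, hmem⟩ (hX.subset (mem_image_of_mem _ hmem))
      simp only [ih, shiftMap_shiftBy] at h
      simp [h]
  | neg hnat n =>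
    have h := hnat n ⟨_, hn⟩ (by simp [shiftBy_shiftBy])
    simp only [shiftBy_shiftBy, add_neg_cancel, shiftBy_zero, Subtype.coe_eta] at h
    rw [h, shiftBy_shiftBy, neg_add_cancel, shiftBy_zero]

end Shift

section Cylinders

variable {ι X : Type*} [TopologicalSpace X] [TopologicalSpace A] [DiscreteTopology A]

theorem Continuous.isOpen_setOf_eqOn {f : X → ι → A} (hf : Continuous f) {s : Set ι}
    (hs : s.Finite) (g : ι → A) : IsOpen {x | EqOn (f x) g s} :=
  (isOpen_set_pi hs fun i _ => isOpen_discrete {g i}).preimage hf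

theorem Continuous.eventually_eqOn {f : X → ι → A} (hf : Continuous f) {s : Set ι}
    (hs : s.Finite) (x₀ : X) : ∀ᶠ x in 𝓝 x₀, EqOn (f x) (f x₀) s :=
  (hf.isOpen_setOf_eqOn hs _).mem_nhds fun _ _ => rfl

theorem nhds_hasBasis_eqOn_Icc (x : ℤ → A) :
    (𝓝 x).HasBasis (fun _ => True) fun n : ℕ => {z | EqOn z x (Icc (-n : ℤ) n)} := by
  refine ⟨fun s => ⟨fun hs => ?_, fun ⟨n, _, hn⟩ =>
    mem_of_superset (continuous_id.eventually_eqOn (finite_Icc _ _) x) hn⟩⟩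
  rw [nhds_pi, Filter.mem_pi] at hs
  obtain ⟨I, hI, t, ht, hIt⟩ := hs
  obtain ⟨n, hn⟩ := (hI.image Int.natAbs).bddAbove
  refine ⟨n, trivial, fun z hz => hIt fun i hi => ?_⟩
  have hin : i.natAbs ≤ n := hn (mem_image_of_mem _ hi)
  rw [hz ⟨by omega, by omega⟩]
  exact mem_of_mem_nhds (ht i)

theorem exists_eqOn_Icc_subset_of_mem_nhds {K : Set (ℤ → A)} {x : K} {s : Set K}
    (hs : s ∈ 𝓝 x) : ∃ n : ℕ, {z : K | EqOn (z : ℤ → A) x (Icc (-n : ℤ) n)} ⊆ s := by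
  rw [nhds_subtype] at hs
  simpa using ((nhds_hasBasis_eqOn_Icc (x : ℤ → A)).comap Subtype.val).mem_iff.1 hs

theorem IsClosed.mem_of_forall_exists_eqOn_Icc {K : Set (ℤ → A)} (hK : IsClosed K)
    {x : ℤ → A} (h : ∀ n : ℕ, ∃ z ∈ K, EqOn z x (Icc (-n : ℤ) n)) : x ∈ K :=
  hK.closure_subset ((mem_closure_iff_nhds_basis (nhds_hasBasis_eqOn_Icc x)).2 fun n _ => h n)

end Cylinders

theorem CompactSpace.eventually_forall_of_forall_eventually_prod {ι X : Type*}
    [TopologicalSpace X] [CompactSpace X] {l : Filter ι} {P : ι → X → Prop}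
    (h : ∀ x, ∀ᶠ p in l ×ˢ 𝓝 x, P p.1 p.2) : ∀ᶠ n in l, ∀ x, P n x := by
  have := isCompact_univ.mem_prod_nhdsSet_of_forall (s := {p | P p.1 p.2}) fun x _ => h x
  rw [nhdsSet_univ, ← principal_univ] at this
  simpa using eventually_prod_principal_iff.1 this

section Uniform

variable [TopologicalSpace A] [DiscreteTopology A] [TopologicalSpace B] [DiscreteTopology B]
  {X : Set (ℤ → A)} [CompactSpace X]

theorem Continuous.eventually_eqOn_Icc_imp_eq {β : Type*} [TopologicalSpace β]
    [DiscreteTopology β] {f : X → β} (hf : Continuous f) :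
    ∀ᶠ r : ℕ in atTop, ∀ x x' : X, EqOn (x : ℤ → A) x' (Icc (-r : ℤ) r) → f x = f x' := by
  refine CompactSpace.eventually_forall_of_forall_eventually_prod fun x₀ => ?_
  obtain ⟨n, hn⟩ := exists_eqOn_Icc_subset_of_mem_nhds
    (hf.continuousAt.preimage_mem_nhds ((isOpen_discrete {f x₀}).mem_nhds rfl))
  filter_upwards [(eventually_ge_atTop n).prod_mk
    (continuous_subtype_val.eventually_eqOn (finite_Icc (-n : ℤ) n) x₀)]
  rintro ⟨r, x⟩ ⟨hr, hx⟩ x' hxx'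
  have hmono : Icc (-n : ℤ) n ⊆ Icc (-r : ℤ) r := Icc_subset_Icc (by omega) (by omega)
  have hx' : EqOn (x' : ℤ → A) x₀ (Icc (-n : ℤ) n) := ((hxx'.mono hmono).symm.trans hx)
  exact (hn hx).trans (hn hx').symm

theorem IsOpenMap.eventually_exists_eqOn_Icc {Y : Set (ℤ → B)} {φ : X → Y}
    (hφ : Continuous φ) (hopen : IsOpenMap φ) (M : ℕ) :
    ∀ᶠ m : ℕ in atTop, ∀ (x : X) (y : Y), EqOn (y : ℤ → B) (φ x) (Icc (-m : ℤ) m) →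
      ∃ x', φ x' = y ∧ EqOn (x' : ℤ → A) x (Icc (-M : ℤ) M) := by
  refine CompactSpace.eventually_forall_of_forall_eventually_prod fun x₀ => ?_
  set U := {x : X | EqOn (x : ℤ → A) x₀ (Icc (-M : ℤ) M)}
  have hU : IsOpen U := continuous_subtype_val.isOpen_setOf_eqOn (finite_Icc _ _) _
  obtain ⟨n, hn⟩ := exists_eqOn_Icc_subset_of_mem_nhds
    ((hopen U hU).mem_nhds ⟨x₀, fun _ _ => rfl, rfl⟩)
  filter_upwards [(eventually_ge_atTop n).prod_mk
    ((continuous_subtype_val.eventually_eqOn (finite_Icc (-M : ℤ) M) x₀).and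
      ((continuous_subtype_val.comp hφ).eventually_eqOn (finite_Icc (-n : ℤ) n) x₀))]
  rintro ⟨m, x⟩ ⟨hmn, hxU, hφx⟩ y hy
  have hmono : Icc (-n : ℤ) n ⊆ Icc (-m : ℤ) m := Icc_subset_Icc (by omega) (by omega)
  obtain ⟨x', hx'U, rfl⟩ := hn ((hy.mono hmono).trans hφx)
  exact ⟨x', rfl, hx'U.trans hxU.symm⟩

end Uniform

section Code

variable [Finite A] [TopologicalSpace A] [DiscreteTopology A] [TopologicalSpace B]
  [DiscreteTopology B] {X : Set (ℤ → A)} {Y : Set (ℤ → B)} {φ : X → Y}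

theorem IsCode.eventually_coe_apply_eq_of_eqOn (hX : IsSubshift X) (hφ : IsCode φ) :
    ∀ᶠ r : ℕ in atTop, ∀ (x x' : X) (k : ℤ),
      EqOn (x : ℤ → A) x' (Icc (k - r) (k + r)) → (φ x : ℤ → B) k = (φ x' : ℤ → B) k := by
  have : CompactSpace X := isCompact_iff_compactSpace.1 hX.1.isCompact
  filter_upwards [((continuous_apply 0).comp
    (continuous_subtype_val.comp hφ.1)).eventually_eqOn_Icc_imp_eq] with r hr x x' k hxx'
  have h := hr ⟨shiftBy k x, shiftBy_mem hX.2 k x.2⟩ ⟨shiftBy k x', shiftBy_mem hX.2 k x'.2⟩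
    fun i hi => hxx' ⟨by linarith [hi.1], by linarith [hi.2]⟩
  simpa [hφ.coe_apply_shiftBy hX.2] using h

theorem IsCode.eventually_exists_eqOn_Icc (hX : IsSubshift X) (hY : shiftMap '' Y = Y)
    (hφ : IsCode φ) (hopen : IsOpenMap φ) (M : ℕ) :
    ∀ᶠ m : ℕ in atTop, ∀ (x : X) (y : Y) (c : ℤ), EqOn (y : ℤ → B) (φ x) (Icc (c - m) (c + m)) →
      ∃ x', φ x' = y ∧ EqOn (x' : ℤ → A) x (Icc (c - M) (c + M)) := by
  have : CompactSpace X := isCompact_iff_compactSpace.1 hX.1.isCompact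
  filter_upwards [hopen.eventually_exists_eqOn_Icc hφ.1 M] with m hm x y c hxy
  obtain ⟨x₀, hx₀, hx₀x⟩ := hm ⟨shiftBy c x, shiftBy_mem hX.2 c x.2⟩
    ⟨shiftBy c y, shiftBy_mem hY c y.2⟩ fun i hi => by
      rw [hφ.coe_apply_shiftBy hX.2]
      exact hxy ⟨by linarith [hi.1], by linarith [hi.2]⟩
  refine ⟨⟨shiftBy (-c) x₀, shiftBy_mem hX.2 _ x₀.2⟩, Subtype.ext ?_, fun i hi => ?_⟩
  · rw [hφ.coe_apply_shiftBy hX.2, hx₀]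
    simp [shiftBy_shiftBy]
  · rw [Subtype.coe_mk, shiftBy_apply, ← sub_eq_add_neg]
    simpa using hx₀x (x := i - c) ⟨by linarith [hi.1], by linarith [hi.2]⟩

end Code

section Words

theorem OccursAt.of_eqOn {x y : ℤ → A} {k : ℤ} {w : List A} (h : OccursAt x k w)
    (hxy : EqOn x y (Ico k (k + w.length))) : OccursAt y k w :=
  fun i => (hxy ⟨by omega, by omega⟩).symm.trans (h i)

theorem occursAt_ofFn (y : ℤ → A) (a : ℤ) (N : ℕ) :
    OccursAt y a (List.ofFn fun i : Fin N => y (a + i)) :=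
  fun i => by simp

theorem WordIn.exists_eqOn {Y : Set (ℤ → A)} (hY : shiftMap '' Y = Y) {w : List A}
    (hw : WordIn Y w) {y : ℤ → A} {a : ℤ} (hy : OccursAt y a w) :
    ∃ z ∈ Y, EqOn z y (Ico a (a + w.length)) := by
  obtain ⟨x, hx, l, hl⟩ := hw
  refine ⟨shiftBy (l - a) x, shiftBy_mem hY _ hx, fun i hi => ?_⟩
  obtain ⟨j, rfl⟩ : ∃ j : ℕ, i = a + j := ⟨(i - a).toNat, by have := hi.1; omega⟩
  have hj : j < w.length := by have := hi.2; omega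
  rw [shiftBy_apply, show a + j + (l - a) = l + j by ring, hl ⟨j, hj⟩, hy ⟨j, hj⟩]

end Words

section Splice

def splice (x : ℤ → A) (c : ℤ) (x' : ℤ → A) : ℤ → A := fun i => if i ≤ c then x i else x' i

variable {x x' : ℤ → A} {c : ℤ} {M : ℕ}

theorem eqOn_splice_left (h : EqOn x x' (Icc c (c + M))) :
    EqOn (splice x c x') x (Iic (c + M)) := by
  intro i (hi : i ≤ c + M)
  by_cases hic : i ≤ c
  · simp [splice, hic]
  · simp only [splice, hic, if_false]
    exact (h ⟨by omega, hi⟩).symm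

theorem eqOn_splice_right (h : EqOn x x' (Icc (c - M) c)) :
    EqOn (splice x c x') x' (Ici (c - M)) := by
  intro i (hi : c - M ≤ i)
  by_cases hic : i ≤ c
  · simp only [splice, hic, if_true]
    exact h ⟨hi, hic⟩
  · simp [splice, hic]

def SpliceClosed (X : Set (ℤ → A)) (m : ℕ) : Prop :=
  ∀ x ∈ X, ∀ x' ∈ X, ∀ c : ℤ, EqOn x x' (Icc (c - m) (c + m)) → splice x c x' ∈ X

theorem IsSFT.eventually_spliceClosed {X : Set (ℤ → A)} (hX : IsSFT X) :
    ∀ᶠ M in atTop, SpliceClosed X M := by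
  obtain ⟨F, rfl⟩ := hX
  filter_upwards [eventually_ge_atTop (F.sup List.length)] with M hM
  intro x hx x' hx' c hxx' w hw k hk
  have hlen : w.length ≤ M := (Finset.le_sup hw).trans hM
  by_cases hkc : k ≤ c
  · refine hx w hw k (hk.of_eqOn ((eqOn_splice_left (M := M) (hxx'.mono ?_)).mono ?_))
    · exact Icc_subset_Icc (by omega) le_rfl
    · intro i hi; simp only [mem_Ico, mem_Iic] at hi ⊢; omega
  · refine hx' w hw k (hk.of_eqOn ((eqOn_splice_right (M := M) (hxx'.mono ?_)).mono ?_))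
    · exact Icc_subset_Icc le_rfl (by omega)
    · intro i hi; simp only [mem_Ico, mem_Ici] at hi ⊢; omega

theorem SpliceClosed.isSFT [Finite A] [TopologicalSpace A] [DiscreteTopology A]
    {Y : Set (ℤ → A)} (hY : IsSubshift Y) {m : ℕ} (hm : SpliceClosed Y m) : IsSFT Y := by
  have hfin : {w : List A | w.length = 2 * m + 2 ∧ ¬ WordIn Y w}.Finite :=
    (List.finite_length_eq A _).subset fun w hw => hw.1
  refine ⟨hfin.toFinset, Set.ext fun y =>
    ⟨fun hy w hw k hk => (hfin.mem_toFinset.1 hw).2 ⟨y, hy, k, hk⟩, fun hy => ?_⟩⟩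
  have hwindow : ∀ a : ℤ, ∃ z ∈ Y, EqOn z y (Ico a (a + (2 * m + 2 : ℕ))) := fun a => by
    have hocc := occursAt_ofFn y a (2 * m + 2)
    have hword : WordIn Y (List.ofFn fun i : Fin (2 * m + 2) => y (a + i)) := by
      by_contra h
      exact hy _ (hfin.mem_toFinset.2 ⟨List.length_ofFn, h⟩) a hocc
    have := hword.exists_eqOn hY.2 hocc
    rwa [List.length_ofFn] at this
  have hgrow : ∀ a b : ℤ, a + 2 * m + 1 ≤ b → ∃ z ∈ Y, EqOn z y (Icc a b) := by
    intro a b hab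
    induction b, hab using Int.leInduction with
    | base =>
      obtain ⟨z, hz, hzy⟩ := hwindow a
      exact ⟨z, hz, hzy.mono (Icc_subset_Ico_right (by push_cast; omega))⟩
    | succ b hab ih =>
      obtain ⟨z, hz, hzy⟩ := ih
      -- the window `[b - 2m, b + 1]` overlaps `z` on `[b - 2m, b]`; glue in the middle
      obtain ⟨z', hz', hz'y⟩ := hwindow (b - 2 * m)
      refine ⟨splice z (b - m) z', hm z hz z' hz' (b - m) fun i ⟨hi₁, hi₂⟩ => ?_,
        fun i ⟨hi₁, hi₂⟩ => ?_⟩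
      · exact (hzy ⟨by omega, by omega⟩).trans (hz'y ⟨by omega, by push_cast; omega⟩).symm
      · by_cases hic : i ≤ b - m
        · simp only [splice, hic, if_true]
          exact hzy ⟨hi₁, by omega⟩
        · simp only [splice, hic, if_false]
          exact hz'y ⟨by omega, by push_cast; omega⟩
  refine hY.1.mem_of_forall_exists_eqOn_Icc fun n => ?_
  obtain ⟨z, hz, hzy⟩ := hgrow (-n - 2 * m - 1) n (by omega)
  exact ⟨z, hz, hzy.mono (Icc_subset_Icc (by omega) le_rfl)⟩

end Splice

theorem IsCode.eventually_spliceClosed_of_surjective_of_isOpenMap [Finite A]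
    [TopologicalSpace A] [DiscreteTopology A] [TopologicalSpace B] [DiscreteTopology B]
    {X : Set (ℤ → A)} {Y : Set (ℤ → B)} {φ : X → Y} (hX : IsSubshift X)
    (hY : shiftMap '' Y = Y) (hφ : IsCode φ) (hsurj : Surjective φ) (hopen : IsOpenMap φ)
    (hXs : ∀ᶠ M in atTop, SpliceClosed X M) : ∀ᶠ m in atTop, SpliceClosed Y m := by
  obtain ⟨M, hM, hr⟩ := (hXs.and (hφ.eventually_coe_apply_eq_of_eqOn hX)).exists
  filter_upwards [hφ.eventually_exists_eqOn_Icc hX hY hopen M] with m hlift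
  intro y hy y' hy' c hyy'
  obtain ⟨x, hx⟩ := hsurj ⟨y, hy⟩
  obtain ⟨x', hx', hxx'⟩ := hlift x ⟨y', hy'⟩ c (by rw [hx]; exact hyy'.symm)
  let s : X := ⟨splice x c x', hM x x.2 x' x'.2 c hxx'.symm⟩
  have hs : (φ s : ℤ → B) = splice y c y' := by
    funext i
    by_cases hic : i ≤ c
    · have hsx : EqOn (s : ℤ → A) x (Icc (i - M) (i + M)) :=
        (eqOn_splice_left (hxx'.symm.mono (Icc_subset_Icc (by omega) le_rfl))).mono
          fun j hj => by simp only [mem_Icc, mem_Iic] at hj ⊢; omega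
      rw [hr s x i hsx, hx]
      simp [splice, hic]
    · have hsx' : EqOn (s : ℤ → A) x' (Icc (i - M) (i + M)) :=
        (eqOn_splice_right (hxx'.symm.mono (Icc_subset_Icc le_rfl (by omega)))).mono
          fun j hj => by simp only [mem_Icc, mem_Ici] at hj ⊢; omega
      rw [hr s x' i hsx', hx']
      simp [splice, hic]
  exact hs ▸ (φ s).2

theorem open_factor_of_SFT_is_SFT {A : Type*} {B : Type*} [Finite A] [TopologicalSpace A] [DiscreteTopology A]
    [Finite B] [TopologicalSpace B] [DiscreteTopology B]
    {X : Set (ℤ → A)} {Y : Set (ℤ → B)} (hX : IsSubshift X) (hY : IsSubshift Y)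
    (φ : X → Y) (hφ : IsCode φ)
    (hXsft : IsSFT X) (hsurj : Function.Surjective φ) (hopen : IsOpenMap φ) :
    IsSFT Y := by
  obtain ⟨m, hm⟩ := (hφ.eventually_spliceClosed_of_surjective_of_isOpenMap hX hY.2 hsurj hopen
    hXsft.eventually_spliceClosed).exists
  exact hm.isSFT hY
end

section
/- Let (Σ, ψ₁, ψ₂) be the fiber product of codes φ₁ : X → Z and φ₂ : Y → Z between shift spaces, with φ₂ onto. If ψ₂ is open, then φ₁ is open. -/
open Set Function Filter

variable {A : Type*} {B : Type*} {C : Type*}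

/-! A surjective code from a compact shift space onto a Hausdorff one is a quotient map, and
`φ₂⁻¹(φ₁ U) = ψ₂(ψ₁⁻¹ U)` for every `U ⊆ X`; so when `ψ₂` is open, `φ₁ U` has open preimage under
the quotient map `φ₂`, hence is open. -/

theorem preimage_image_eq_image_pullback_snd {X Y Z : Type*} (f : X → Z) (g : Y → Z) (U : Set X) :
    g ⁻¹' (f '' U) =
      (fun p : {p : X × Y // f p.1 = g p.2} => p.1.2) ''
        ((fun p : {p : X × Y // f p.1 = g p.2} => p.1.1) ⁻¹' U) := by
  ext y
  constructor
  · rintro ⟨x, hxU, hxy⟩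
    exact ⟨⟨(x, y), hxy⟩, hxU, rfl⟩
  · rintro ⟨⟨⟨x, y⟩, hxy⟩, hxU, rfl⟩
    exact ⟨x, hxU, hxy⟩

theorem IsOpenMap.of_isOpenMap_pullback_snd {X Y Z : Type*}
    [TopologicalSpace X] [TopologicalSpace Y] [TopologicalSpace Z]
    {f : X → Z} {g : Y → Z} (hg : Topology.IsQuotientMap g)
    (hsnd : IsOpenMap (fun p : {p : X × Y // f p.1 = g p.2} => p.1.2)) :
    IsOpenMap f := by
  intro U hU
  rw [← hg.isOpen_preimage, preimage_image_eq_image_pullback_snd]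
  exact hsnd _ (hU.preimage (continuous_fst.comp continuous_subtype_val))

theorem isQuotientMap_of_isClosed_of_surjective {B W : Type*} [Finite B] [TopologicalSpace B]
    [TopologicalSpace W] [T2Space W] {Y : Set (ℤ → B)} (hY : IsClosed Y) {g : Y → W}
    (hg : Continuous g) (hsurj : Function.Surjective g) : Topology.IsQuotientMap g :=
  have : CompactSpace Y := isCompact_iff_compactSpace.mp hY.isCompact
  hg.isClosedMap.isQuotientMap hg hsurj

theorem fiber_product_open_descends_general {A : Type*} {B : Type*} {C : Type*}
    [TopologicalSpace A]
    [Finite B] [TopologicalSpace B]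
    [TopologicalSpace C] [DiscreteTopology C]
    {X : Set (ℤ → A)} {Y : Set (ℤ → B)} {Z : Set (ℤ → C)}
    (hY : IsSubshift Y)
    (φ₁ : X → Z) (φ₂ : Y → Z) (hφ₂ : IsCode φ₂)
    (hsurj : Function.Surjective φ₂)
    (hopen : IsOpenMap (fun p : {p : X × Y // φ₁ p.1 = φ₂ p.2} => p.1.2)) :
    IsOpenMap φ₁ :=
  IsOpenMap.of_isOpenMap_pullback_snd
    (isQuotientMap_of_isClosed_of_surjective hY.1 hφ₂.1 hsurj) hopen

theorem fiber_product_open_descends {A : Type*} {B : Type*} {C : Type*}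
    [Finite A] [TopologicalSpace A] [DiscreteTopology A]
    [Finite B] [TopologicalSpace B] [DiscreteTopology B]
    [Finite C] [TopologicalSpace C] [DiscreteTopology C]
    {X : Set (ℤ → A)} {Y : Set (ℤ → B)} {Z : Set (ℤ → C)}
    (hX : IsSubshift X) (hY : IsSubshift Y) (hZ : IsSubshift Z)
    (φ₁ : X → Z) (hφ₁ : IsCode φ₁) (φ₂ : Y → Z) (hφ₂ : IsCode φ₂)
    (hsurj : Function.Surjective φ₂)
    (hopen : IsOpenMap (fun p : {p : X × Y // φ₁ p.1 = φ₂ p.2} => p.1.2)) :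
    IsOpenMap φ₁ :=
  fiber_product_open_descends_general hY φ₁ φ₂ hφ₂ hsurj hopen
end

section
/- Let φ : X → Y be a finite-to-one open code from a shift space X to an irreducible shift space Y. Then there exists d > 0 such that every doubly transitive point of Y has exactly d preimages under φ, and every point of Y has at most d preimages. -/
open Set Function Filter

variable {A : Type*} {B : Type*} {C : Type*}

/-!
The number of preimages of a finite-to-one open map is lower semicontinuous: disjoint
neighbourhoods of the points of a fibre are mapped onto neighbourhoods of its base point. It is
also constant along shift orbits, because a code commutes with the shift. The forward orbit of a
doubly transitive point is dense, so the fibre over it is at least as large as any other fibre,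
and comparing two doubly transitive points gives equality. Doubly transitive points exist by
the Baire category theorem: for every word `w` and position `N`, the points in which `w` occurs
both left and right of `N` form an open set, which is dense by irreducibility.
-/

open Topology

def window (x : ℤ → A) (k : ℤ) (m : ℕ) : List A := List.ofFn fun j : Fin m => x (k + j)

@[simp]
lemma length_window (x : ℤ → A) (k : ℤ) (m : ℕ) : (window x k m).length = m := List.length_ofFn

lemma occursAt_iff {x : ℤ → A} {k : ℤ} {w : List A} :
    OccursAt x k w ↔ ∀ (j : ℕ) (hj : j < w.length), x (k + j) = w[j] := by
  simp [OccursAt, Fin.forall_iff]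

lemma occursAt_window_iff {x y : ℤ → A} {k l : ℤ} {m : ℕ} (h : k + m = l) :
    OccursAt y k (window x k m) ↔ EqOn y x (Ico k l) := by
  simp only [occursAt_iff, window, List.length_ofFn, List.getElem_ofFn]
  constructor
  · intro hy i ⟨hki, hil⟩
    obtain ⟨j, rfl⟩ : ∃ j : ℕ, i = k + j := ⟨(i - k).toNat, by omega⟩
    exact hy j (by omega)
  · exact fun hy j hj => hy ⟨by omega, by omega⟩

lemma wordIn_window {X : Set (ℤ → A)} {x : ℤ → A} (hx : x ∈ X) (k : ℤ) (m : ℕ) :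
    WordIn X (window x k m) :=
  ⟨x, hx, k, (occursAt_window_iff rfl).mpr (eqOn_refl _ _)⟩

lemma occursAt_append {x : ℤ → A} {k : ℤ} {u v : List A} :
    OccursAt x k (u ++ v) ↔ OccursAt x k u ∧ OccursAt x (k + u.length) v := by
  simp only [occursAt_iff, List.length_append]
  constructor
  · intro h
    refine ⟨fun j hj => ?_, fun j hj => ?_⟩
    · rw [h j (by omega), List.getElem_append_left hj]
    · rw [add_assoc, ← Nat.cast_add, h _ (by omega), List.getElem_append_right (by omega)]
      simp
  · rintro ⟨hu, hv⟩ j hj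
    rcases lt_or_ge j u.length with hju | hju
    · rw [hu j hju, List.getElem_append_left hju]
    · obtain ⟨i, rfl⟩ := Nat.exists_eq_add_of_le hju
      rw [Nat.cast_add, ← add_assoc, hv i (by omega), List.getElem_append_right (by omega)]
      simp

lemma shiftMap_injective : Injective (shiftMap : (ℤ → A) → ℤ → A) :=
  fun x y h => funext fun i => by simpa [shiftMap] using congrFun h (i - 1)

lemma shiftMap_iterate_apply (x : ℤ → A) (n : ℕ) (i : ℤ) : shiftMap^[n] x i = x (i + n) := by
  induction n generalizing x with
  | zero => simp
  | succ n ih => rw [iterate_succ_apply, ih]; simp [shiftMap, add_assoc]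

lemma occursAt_shiftMap_iterate {x : ℤ → A} {n : ℕ} {k : ℤ} {w : List A} :
    OccursAt (shiftMap^[n] x) k w ↔ OccursAt x (k + n) w := by
  simp only [OccursAt, shiftMap_iterate_apply, add_right_comm]

lemma isOpen_setOf_occursAt [TopologicalSpace A] [DiscreteTopology A] (k : ℤ) (w : List A) :
    IsOpen {x : ℤ → A | OccursAt x k w} := by
  simp only [OccursAt, ofPred_forall]
  exact isOpen_iInter_of_finite fun i =>
    (isOpen_discrete {w.get i}).preimage (continuous_apply (A := fun _ : ℤ => A) (k + (i : ℕ)))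

lemma isOpen_setOf_exists_occursAt [TopologicalSpace A] [DiscreteTopology A] (s : Set ℤ)
    (w : List A) : IsOpen {x : ℤ → A | ∃ k ∈ s, OccursAt x k w} := by
  convert isOpen_biUnion fun k (_ : k ∈ s) => isOpen_setOf_occursAt k w
  ext
  simp

lemma eventually_forall_occursAt_window_mem [TopologicalSpace A] [DiscreteTopology A]
    {z : ℤ → A} {u : Set (ℤ → A)} (hu : u ∈ 𝓝 z) :
    ∀ᶠ n : ℕ in atTop, ∀ y, OccursAt y (-n) (window z (-n) (2 * n)) → y ∈ u := by
  rw [nhds_pi, Filter.mem_pi] at hu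
  obtain ⟨I, hI, t, ht, hIu⟩ := hu
  obtain ⟨N, hN⟩ := (hI.image Int.natAbs).bddAbove
  filter_upwards [eventually_gt_atTop N] with n hn y hy
  rw [occursAt_window_iff (l := n) (by omega)] at hy
  refine hIu fun i hi => ?_
  have : i.natAbs ≤ N := hN (mem_image_of_mem _ hi)
  rw [hy ⟨by omega, by omega⟩]
  exact mem_of_mem_nhds (ht i)

namespace IsSubshift

variable [TopologicalSpace A] {X : Set (ℤ → A)}

lemma bijOn_shiftMap (hX : IsSubshift X) : BijOn shiftMap X X :=
  ⟨mapsTo_iff_image_subset.mpr hX.2.subset, shiftMap_injective.injOn, hX.2.superset⟩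

def shift (hX : IsSubshift X) : X → X := hX.bijOn_shiftMap.mapsTo.restrict _ _ _

lemma bijective_shift (hX : IsSubshift X) : Bijective hX.shift := hX.bijOn_shiftMap.bijective

lemma coe_shift_iterate (hX : IsSubshift X) (n : ℕ) (x : X) :
    ((hX.shift^[n] x : X) : ℤ → A) = shiftMap^[n] x := by
  rw [shift, MapsTo.iterate_restrict]
  rfl

lemma exists_occursAt (hX : IsSubshift X) {w : List A} (hw : WordIn X w) (k : ℤ) :
    ∃ x ∈ X, OccursAt x k w := by
  obtain ⟨x, hx, j, hj⟩ := hw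
  obtain ⟨x', hx', hxx'⟩ := (hX.bijOn_shiftMap.iterate (k - j).toNat).surjOn
    ((hX.bijOn_shiftMap.iterate (j - k).toNat).mapsTo hx)
  refine ⟨x', hx', ?_⟩
  have : OccursAt (shiftMap^[(j - k).toNat] x) (j - (j - k).toNat) w := by
    rwa [occursAt_shiftMap_iterate, sub_add_cancel]
  rw [← hxx', occursAt_shiftMap_iterate] at this
  convert this using 1
  omega

variable [DiscreteTopology A]

lemma dense_setOf_occursAt_ge_and_le (hX : IsSubshift X) (hirr : IrreducibleSubshift X)
    {w : List A} (hw : WordIn X w) (N : ℤ) :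
    Dense {x : X | (∃ k ≥ N, OccursAt x.1 k w) ∧ (∃ k ≤ N, OccursAt x.1 k w)} := by
  refine fun z => mem_closure_iff_nhds.mpr fun V hV => ?_
  obtain ⟨u, hu, huV⟩ := (mem_nhds_subtype _ _ _).mp hV
  obtain ⟨n, hnN, hn⟩ :=
    ((eventually_ge_atTop N.natAbs).and (eventually_forall_occursAt_window_mem hu)).exists
  obtain ⟨a, ha⟩ := hirr _ w (wordIn_window z.2 _ _) hw
  obtain ⟨b, hb⟩ := hirr w _ hw ha
  -- place `w b c a w`, where `c` is the central block of `z`, so that `c` starts at `-n`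
  obtain ⟨y, hy, hocc⟩ := hX.exists_occursAt hb (-n - b.length - w.length)
  simp only [occursAt_append, List.length_append, length_window] at hocc
  obtain ⟨⟨hwL, -⟩, ⟨hc, -⟩, hwR⟩ := hocc
  refine ⟨⟨y, hy⟩, huV (hn y ?_), ⟨_, ?_, hwR⟩, ⟨_, ?_, hwL⟩⟩
  · convert hc using 1; push_cast; ring
  · push_cast; omega
  · omega

lemma dense_doublyTransitive [Finite A] (hX : IsSubshift X) (hirr : IrreducibleSubshift X) :
    Dense {x : X | DoublyTransitive X x} := by
  have : CompactSpace X := isCompact_iff_compactSpace.mp hX.1.isCompact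
  have hDT : {x : X | DoublyTransitive X x} = ⋂ p : {w // WordIn X w} × ℤ,
      {x : X | (∃ k ≥ p.2, OccursAt x.1 k p.1.1) ∧ (∃ k ≤ p.2, OccursAt x.1 k p.1.1)} := by
    ext x
    simp [DoublyTransitive]
  rw [hDT]
  refine dense_iInter_of_isOpen (fun p => ?_) fun p =>
    hX.dense_setOf_occursAt_ge_and_le hirr p.1.2 p.2
  exact ((isOpen_setOf_exists_occursAt (Ici p.2) _).inter
    (isOpen_setOf_exists_occursAt (Iic p.2) _)).preimage continuous_subtype_val

lemma denseRange_shift_iterate (hX : IsSubshift X) {x : X} (hx : DoublyTransitive X x) :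
    DenseRange fun n : ℕ => hX.shift^[n] x := by
  refine fun z => mem_closure_iff_nhds.mpr fun V hV => ?_
  obtain ⟨u, hu, huV⟩ := (mem_nhds_subtype _ _ _).mp hV
  obtain ⟨n, hn⟩ := (eventually_forall_occursAt_window_mem hu).exists
  obtain ⟨k, hk0, hk⟩ := (hx _ (wordIn_window z.2 _ _) 0).1
  refine ⟨_, huV (hn _ ?_), (k + n).toNat, rfl⟩
  rw [coe_shift_iterate, occursAt_shiftMap_iterate]
  convert hk using 1
  omega

end IsSubshift

lemma IsCode.semiconj_shift [TopologicalSpace A] [TopologicalSpace B] {X : Set (ℤ → A)}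
    {Y : Set (ℤ → B)} {φ : X → Y} (hφ : IsCode φ) (hX : IsSubshift X) (hY : IsSubshift Y) :
    Semiconj φ hX.shift hY.shift :=
  fun x => Subtype.ext (hφ.2 x _)

lemma Function.Semiconj.card_fiber_eq {α β : Type*} {φ : α → β} {e : α → α} {f : β → β}
    (h : Semiconj φ e f) (he : Bijective e) (hf : Injective f) (y : β) :
    Nat.card (φ ⁻¹' {f y}) = Nat.card (φ ⁻¹' {y}) := by
  suffices φ ⁻¹' {f y} = e '' (φ ⁻¹' {y}) by rw [this, Nat.card_image_of_injective he.1]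
  ext x
  obtain ⟨x, rfl⟩ := he.2 x
  simp [he.1.mem_set_image, h x, hf.eq_iff]

lemma IsOpenMap.eventually_card_fiber_le {α β : Type*} [TopologicalSpace α] [T2Space α]
    [TopologicalSpace β] {φ : α → β} (hφ : IsOpenMap φ) (hfin : FiniteToOne φ) (z : β) :
    ∀ᶠ y in 𝓝 z, Nat.card (φ ⁻¹' {z}) ≤ Nat.card (φ ⁻¹' {y}) := by
  obtain ⟨U, hU, hdisj⟩ := (hfin z).t2_separation
  have hV : ⋂ p ∈ φ ⁻¹' {z}, φ '' U p ∈ 𝓝 z := (biInter_mem (hfin z)).mpr fun p hp =>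
    hp ▸ hφ.image_mem_nhds ((hU p).2.mem_nhds (hU p).1)
  filter_upwards [hV] with y hy
  choose g hgU hgy using fun p (hp : p ∈ φ ⁻¹' {z}) => mem_iInter₂.mp hy p hp
  have := (hfin y).to_subtype
  refine Nat.card_le_card_of_injective (fun p => ⟨g p p.2, hgy p p.2⟩) fun p q hpq => ?_
  refine Subtype.ext (hdisj.elim p.2 q.2 (not_disjoint_iff.mpr ⟨g p p.2, hgU p p.2, ?_⟩))
  rw [show g p p.2 = g q q.2 from congrArg Subtype.val hpq]
  exact hgU q q.2

lemma card_fiber_le_of_doublyTransitive [TopologicalSpace A] [DiscreteTopology A]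
    [TopologicalSpace B] [DiscreteTopology B] {X : Set (ℤ → A)} {Y : Set (ℤ → B)}
    (hX : IsSubshift X) (hY : IsSubshift Y) {φ : X → Y} (hφ : IsCode φ) (hfin : FiniteToOne φ)
    (hopen : IsOpenMap φ) {y : Y} (hy : DoublyTransitive Y y) (z : Y) :
    Nat.card (φ ⁻¹' {z}) ≤ Nat.card (φ ⁻¹' {y}) := by
  obtain ⟨_, hz, n, rfl⟩ := ((hopen.eventually_card_fiber_le hfin z).and_frequently
    (mem_closure_iff_frequently.mp (hY.denseRange_shift_iterate hy z))).exists
  exact hz.trans_eq <| ((hφ.semiconj_shift hX hY).iterate_right n).card_fiber_eq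
    (hX.bijective_shift.iterate n) (hY.bijective_shift.iterate n).1 y

theorem finite_to_one_open_has_degree_general {A : Type*} {B : Type*} [TopologicalSpace A] [DiscreteTopology A]
    [Finite B] [TopologicalSpace B] [DiscreteTopology B]
    {X : Set (ℤ → A)} {Y : Set (ℤ → B)} (hX : IsSubshift X) (hY : IsSubshift Y)
    (φ : X → Y) (hφ : IsCode φ)
    (hne : X.Nonempty) (hfin : FiniteToOne φ) (hopen : IsOpenMap φ)
    (hYirr : IrreducibleSubshift Y) :
    ∃ d : ℕ, 0 < d ∧
      (∀ y : Y, DoublyTransitive Y y.1 →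
        (φ ⁻¹' {y}).Finite ∧ Nat.card (φ ⁻¹' {y}) = d) ∧
      (∀ y : Y, (φ ⁻¹' {y}).Finite ∧ Nat.card (φ ⁻¹' {y}) ≤ d) := by
  obtain ⟨x₀, hx₀⟩ := hne
  have : Nonempty Y := ⟨φ ⟨x₀, hx₀⟩⟩
  obtain ⟨y₀, hy₀⟩ := (hY.dense_doublyTransitive hYirr).nonempty
  have hle {y : Y} (hy : DoublyTransitive Y y) (z : Y) :=
    card_fiber_le_of_doublyTransitive hX hY hφ hfin hopen hy z
  refine ⟨Nat.card (φ ⁻¹' {y₀}), ?_, fun y hy => ⟨hfin y, (hle hy₀ y).antisymm (hle hy y₀)⟩,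
    fun y => ⟨hfin y, hle hy₀ y⟩⟩
  exact (Nat.card_pos_iff.mpr ⟨⟨⟨⟨x₀, hx₀⟩, rfl⟩⟩, (hfin _).to_subtype⟩).trans_le (hle hy₀ _)

theorem finite_to_one_open_has_degree {A : Type*} {B : Type*} [Finite A] [TopologicalSpace A] [DiscreteTopology A]
    [Finite B] [TopologicalSpace B] [DiscreteTopology B]
    {X : Set (ℤ → A)} {Y : Set (ℤ → B)} (hX : IsSubshift X) (hY : IsSubshift Y)
    (φ : X → Y) (hφ : IsCode φ)
    (hne : X.Nonempty) (hfin : FiniteToOne φ) (hopen : IsOpenMap φ)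
    (hYirr : IrreducibleSubshift Y) :
    ∃ d : ℕ, 0 < d ∧
      (∀ y : Y, DoublyTransitive Y y.1 →
        (φ ⁻¹' {y}).Finite ∧ Nat.card (φ ⁻¹' {y}) = d) ∧
      (∀ y : Y, (φ ⁻¹' {y}).Finite ∧ Nat.card (φ ⁻¹' {y}) ≤ d) :=
  finite_to_one_open_has_degree_general hX hY φ hφ hne hfin hopen hYirr
end
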